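/- arXiv:2403.03200 — 4 statements merged into one kernel-verified Lean document; each statement's English description precedes it below -/
import Mathlib

section
/- Let n ≥ 1, let Ω ⊆ ℝⁿ be open, let ψ, φ : ℝⁿ → ℝ be twice continuously differentiable on Ω, let ρ̃ : Ω → ℝ and λ ∈ ℝ. Assume that on Ω the function ψ satisfies Δψ + (n−2)·⟪∇φ, ∇ψ⟫ = −λ·ρ̃·e^{2φ}·ψ. Then the function u := e^{((n−2)/2)·φ}·ψ satisfies on Ω the Schrödinger equation −Δu + ( ((n−2)²/4)·‖∇φ‖² + ((n−2)/2)·Δφ )·u = λ·e^{2φ}·ρ̃·u. -/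
/-!
With c = (n - 2)/2 and u = e^{cφ} ψ, the product rule Δ(ab) = a Δb + 2⟪∇a, ∇b⟫ + b Δa and
Δ e^h = e^h (Δh + ‖∇h‖²) give Δu = e^{cφ} (Δψ + 2c ⟪∇φ, ∇ψ⟫) + (c² ‖∇φ‖² + c Δφ) u; since
2c = n - 2, the first bracket is the left-hand side of the eigenvalue equation.
-/

open scoped RealInnerProductSpace

/-- The Euclidean Laplacian: the sum of the pure second partial derivatives. -/
noncomputable def laplacian {n : ℕ} (f : EuclideanSpace ℝ (Fin n) → ℝ)
    (x : EuclideanSpace ℝ (Fin n)) : ℝ :=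
  ∑ i : Fin n, fderiv ℝ (fderiv ℝ f) x (EuclideanSpace.single i 1) (EuclideanSpace.single i 1)

open Filter Topology

section SecondDerivative

variable {E : Type*} [NormedAddCommGroup E] [NormedSpace ℝ E] {f g h : E → ℝ} {x : E}

theorem ContDiffAt.differentiableAt_fderiv (hf : ContDiffAt ℝ 2 f x) :
    DifferentiableAt ℝ (fderiv ℝ f) x :=
  (hf.fderiv_right (m := 1) le_rfl).differentiableAt one_ne_zero

theorem ContDiffAt.eventually_differentiableAt (hf : ContDiffAt ℝ 2 f x) :
    ∀ᶠ y in 𝓝 x, DifferentiableAt ℝ f y :=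
  (hf.eventually (by simp)).mono fun _ hy => hy.differentiableAt two_ne_zero

theorem fderiv_fderiv_mul_apply (hf : ContDiffAt ℝ 2 f x) (hg : ContDiffAt ℝ 2 g x) (v w : E) :
    fderiv ℝ (fderiv ℝ fun y => f y * g y) x v w =
      f x * fderiv ℝ (fderiv ℝ g) x v w + fderiv ℝ f x v * fderiv ℝ g x w +
        fderiv ℝ g x v * fderiv ℝ f x w + g x * fderiv ℝ (fderiv ℝ f) x v w := by
  have hderiv : fderiv ℝ (fun y => f y * g y) =ᶠ[𝓝 x]
      fun y => f y • fderiv ℝ g y + g y • fderiv ℝ f y := by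
    filter_upwards [hf.eventually_differentiableAt, hg.eventually_differentiableAt]
      with y hfy hgy using fderiv_fun_mul hfy hgy
  have hfx := hf.differentiableAt two_ne_zero
  have hgx := hg.differentiableAt two_ne_zero
  rw [hderiv.fderiv_eq, fderiv_fun_add (hfx.fun_smul hg.differentiableAt_fderiv)
      (hgx.fun_smul hf.differentiableAt_fderiv),
    fderiv_fun_smul hfx hg.differentiableAt_fderiv, fderiv_fun_smul hgx hf.differentiableAt_fderiv]
  simp only [add_apply, smul_apply,
    ContinuousLinearMap.smulRight_apply, smul_eq_mul]
  ring

theorem fderiv_fderiv_exp_apply (hh : ContDiffAt ℝ 2 h x) (v w : E) :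
    fderiv ℝ (fderiv ℝ fun y => Real.exp (h y)) x v w =
      Real.exp (h x) * (fderiv ℝ (fderiv ℝ h) x v w + fderiv ℝ h x v * fderiv ℝ h x w) := by
  have hderiv : fderiv ℝ (fun y => Real.exp (h y)) =ᶠ[𝓝 x]
      fun y => Real.exp (h y) • fderiv ℝ h y := by
    filter_upwards [hh.eventually_differentiableAt] with y hy using fderiv_exp hy
  have hhx := hh.differentiableAt two_ne_zero
  rw [hderiv.fderiv_eq, fderiv_fun_smul hhx.exp hh.differentiableAt_fderiv, fderiv_exp hhx]
  simp only [add_apply, smul_apply,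
    ContinuousLinearMap.smulRight_apply, smul_eq_mul]
  ring

theorem fderiv_fderiv_const_mul (hh : ContDiffAt ℝ 2 h x) (c : ℝ) :
    fderiv ℝ (fderiv ℝ fun y => c * h y) x = c • fderiv ℝ (fderiv ℝ h) x := by
  have hderiv : fderiv ℝ (fun y => c * h y) =ᶠ[𝓝 x] fun y => c • fderiv ℝ h y := by
    filter_upwards [hh.eventually_differentiableAt] with y hy using fderiv_const_mul hy c
  rw [hderiv.fderiv_eq, fderiv_fun_const_smul hh.differentiableAt_fderiv]

end SecondDerivative

section Euclidean

variable {n : ℕ} {f g h : EuclideanSpace ℝ (Fin n) → ℝ} {x : EuclideanSpace ℝ (Fin n)}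

theorem inner_gradient_eq_sum_fderiv :
    ⟪gradient f x, gradient g x⟫ =
      ∑ i, fderiv ℝ f x (EuclideanSpace.single i 1) * fderiv ℝ g x (EuclideanSpace.single i 1) := by
  rw [← (EuclideanSpace.basisFun (Fin n) ℝ).sum_inner_mul_inner]
  refine Finset.sum_congr rfl fun i _ => ?_
  rw [EuclideanSpace.basisFun_apply, real_inner_comm (gradient g x), gradient, gradient,
    InnerProductSpace.toDual_symm_apply, InnerProductSpace.toDual_symm_apply]

theorem laplacian_mul (hf : ContDiffAt ℝ 2 f x) (hg : ContDiffAt ℝ 2 g x) :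
    laplacian (fun y => f y * g y) x =
      f x * laplacian g x + 2 * ⟪gradient f x, gradient g x⟫ + g x * laplacian f x := by
  simp only [laplacian, fderiv_fderiv_mul_apply hf hg, inner_gradient_eq_sum_fderiv,
    Finset.mul_sum, ← Finset.sum_add_distrib]
  exact Finset.sum_congr rfl fun i _ => by ring

theorem laplacian_exp (hh : ContDiffAt ℝ 2 h x) :
    laplacian (fun y => Real.exp (h y)) x =
      Real.exp (h x) * (laplacian h x + ‖gradient h x‖ ^ 2) := by
  simp only [laplacian, fderiv_fderiv_exp_apply hh, ← real_inner_self_eq_norm_sq,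
    inner_gradient_eq_sum_fderiv, ← Finset.sum_add_distrib, Finset.mul_sum]

theorem laplacian_const_mul (hh : ContDiffAt ℝ 2 h x) (c : ℝ) :
    laplacian (fun y => c * h y) x = c * laplacian h x := by
  simp only [laplacian, fderiv_fderiv_const_mul hh, smul_apply, smul_eq_mul,
    Finset.mul_sum]

theorem gradient_exp (hh : DifferentiableAt ℝ h x) :
    gradient (fun y => Real.exp (h y)) x = Real.exp (h x) • gradient h x := by
  simp [gradient, fderiv_exp hh]

theorem gradient_const_mul (hh : DifferentiableAt ℝ h x) (c : ℝ) :
    gradient (fun y => c * h y) x = c • gradient h x := by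
  simp [gradient, fderiv_const_mul hh]

end Euclidean

theorem conformal_eigenfunction_schrodinger_form_general {n : ℕ}
    (Ω : Set (EuclideanSpace ℝ (Fin n))) (hΩ : IsOpen Ω)
    (ψ φ : EuclideanSpace ℝ (Fin n) → ℝ)
    (hψ : ContDiffOn ℝ 2 ψ Ω) (hφ : ContDiffOn ℝ 2 φ Ω)
    (ρ : EuclideanSpace ℝ (Fin n) → ℝ) (lam : ℝ)
    (heq : ∀ x ∈ Ω,
      laplacian ψ x + ((n : ℝ) - 2) * ⟪gradient φ x, gradient ψ x⟫ =
        -lam * ρ x * Real.exp (2 * φ x) * ψ x) :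
    ∀ x ∈ Ω,
      -laplacian (fun y => Real.exp (((n : ℝ) - 2) / 2 * φ y) * ψ y) x +
          (((n : ℝ) - 2) ^ 2 / 4 * ‖gradient φ x‖ ^ 2 +
              ((n : ℝ) - 2) / 2 * laplacian φ x) *
            (Real.exp (((n : ℝ) - 2) / 2 * φ x) * ψ x) =
        lam * Real.exp (2 * φ x) * ρ x *
          (Real.exp (((n : ℝ) - 2) / 2 * φ x) * ψ x) := by
  intro x hx
  have hφx : ContDiffAt ℝ 2 φ x := hφ.contDiffAt (hΩ.mem_nhds hx)
  have hψx : ContDiffAt ℝ 2 ψ x := hψ.contDiffAt (hΩ.mem_nhds hx)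
  have hcφ : ContDiffAt ℝ 2 (fun y => ((n : ℝ) - 2) / 2 * φ y) x := contDiffAt_const.mul hφx
  have hφd : DifferentiableAt ℝ φ x := hφx.differentiableAt two_ne_zero
  rw [laplacian_mul hcφ.exp hψx, laplacian_exp hcφ, laplacian_const_mul hφx,
    gradient_exp (hφd.const_mul _), gradient_const_mul hφd, real_inner_smul_left,
    real_inner_smul_left, norm_smul, mul_pow, Real.norm_eq_abs, sq_abs]
  linear_combination (-Real.exp (((n : ℝ) - 2) / 2 * φ x)) * heq x hx

theorem conformal_eigenfunction_schrodinger_form {n : ℕ} (hn : 1 ≤ n)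
    (Ω : Set (EuclideanSpace ℝ (Fin n))) (hΩ : IsOpen Ω)
    (ψ φ : EuclideanSpace ℝ (Fin n) → ℝ)
    (hψ : ContDiffOn ℝ 2 ψ Ω) (hφ : ContDiffOn ℝ 2 φ Ω)
    (ρ : EuclideanSpace ℝ (Fin n) → ℝ) (lam : ℝ)
    (heq : ∀ x ∈ Ω,
      laplacian ψ x + ((n : ℝ) - 2) * ⟪gradient φ x, gradient ψ x⟫ =
        -lam * ρ x * Real.exp (2 * φ x) * ψ x) :
    ∀ x ∈ Ω,
      -laplacian (fun y => Real.exp (((n : ℝ) - 2) / 2 * φ y) * ψ y) x +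
          (((n : ℝ) - 2) ^ 2 / 4 * ‖gradient φ x‖ ^ 2 +
              ((n : ℝ) - 2) / 2 * laplacian φ x) *
            (Real.exp (((n : ℝ) - 2) / 2 * φ x) * ψ x) =
        lam * Real.exp (2 * φ x) * ρ x *
          (Real.exp (((n : ℝ) - 2) / 2 * φ x) * ψ x) :=
  conformal_eigenfunction_schrodinger_form_general Ω hΩ ψ φ hψ hφ ρ lam heq
end

section
/- Let β > 0 and define ρ₀ : ℝ² → ℝ by ρ₀(x) = 4/(1+‖x‖²)². Then the function x ↦ ρ₀(x)^β is concave on the closed convex set {x ∈ ℝ² : ‖x‖² ≤ 1/(1+4β)}. -/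
/-!
Writing `r = ‖x‖`, the weight is `ρ₀(x)^β = 4^β (1 + r²)^(-2β)`, a radial profile in `r`.
The profile is nonincreasing on `[0, ∞)`, and its second derivative
`-4β (1 + r²)^(-2β-2) (1 - (1 + 4β) r²)` is nonpositive exactly where `r² ≤ 1/(1 + 4β)`.
A concave nonincreasing function of the convex function `‖x‖` is concave.
-/

open Real Set Metric

theorem ConcaveOn.comp_norm_closedBall {E : Type*} [SeminormedAddCommGroup E] [NormedSpace ℝ E]
    {f : ℝ → ℝ} {R : ℝ} (hf : ConcaveOn ℝ (Icc 0 R) f) (hf_anti : AntitoneOn f (Icc 0 R)) :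
    ConcaveOn ℝ (closedBall (0 : E) R) fun x => f ‖x‖ := by
  refine ⟨convex_closedBall 0 R, fun x hx y hy a b ha hb hab => ?_⟩
  have hxI : ‖x‖ ∈ Icc 0 R := ⟨norm_nonneg x, mem_closedBall_zero_iff.mp hx⟩
  have hyI : ‖y‖ ∈ Icc 0 R := ⟨norm_nonneg y, mem_closedBall_zero_iff.mp hy⟩
  have hcombI : a • ‖x‖ + b • ‖y‖ ∈ Icc 0 R := convex_Icc 0 R hxI hyI ha hb hab
  have hnorm : ‖a • x + b • y‖ ≤ a • ‖x‖ + b • ‖y‖ :=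
    (convexOn_norm (convex_closedBall (0 : E) R)).2 hx hy ha hb hab
  calc a • f ‖x‖ + b • f ‖y‖ ≤ f (a • ‖x‖ + b • ‖y‖) := hf.2 hxI hyI ha hb hab
    _ ≤ f ‖a • x + b • y‖ :=
      hf_anti ⟨norm_nonneg _, hnorm.trans hcombI.2⟩ hcombI hnorm

theorem hasDerivAt_one_add_sq_rpow (p r : ℝ) :
    HasDerivAt (fun r : ℝ => (1 + r ^ 2) ^ p) (2 * r * p * (1 + r ^ 2) ^ (p - 1)) r := by
  have h : HasDerivAt (fun r : ℝ => 1 + r ^ 2) (2 * r) r := by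
    simpa using (hasDerivAt_pow 2 r).const_add 1
  exact h.rpow_const (Or.inl (by positivity))

theorem antitoneOn_one_add_sq_rpow {p : ℝ} (hp : p ≤ 0) :
    AntitoneOn (fun r : ℝ => (1 + r ^ 2) ^ p) (Ici 0) := fun r hr s _ hrs =>
  rpow_le_rpow_of_nonpos (by positivity) (by gcongr) hp

theorem concaveOn_one_add_sq_rpow_neg {p R : ℝ} (hp : 0 ≤ p) (hR : (1 + 2 * p) * R ^ 2 ≤ 1) :
    ConcaveOn ℝ (Icc (-R) R) fun r : ℝ => (1 + r ^ 2) ^ (-p) := by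
  have hf' r := hasDerivAt_one_add_sq_rpow (-p) r
  refine concaveOn_of_hasDerivWithinAt2_nonpos (convex_Icc _ _)
    (fun r _ => (hf' r).continuousAt.continuousWithinAt) (fun r _ => (hf' r).hasDerivWithinAt)
    (f'' := fun r => -2 * p * (1 + r ^ 2) ^ (-p - 2) * (1 - (1 + 2 * p) * r ^ 2))
    (fun r _ => ?_) (fun r hr => ?_)
  · have h1 : 0 < 1 + r ^ 2 := by positivity
    have h : HasDerivAt (fun y => -2 * p * y * (1 + y ^ 2) ^ (-p - 1))
        (-2 * p * 1 * (1 + r ^ 2) ^ (-p - 1)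
          + -2 * p * r * (2 * r * (-p - 1) * (1 + r ^ 2) ^ (-p - 1 - 1))) r :=
      ((hasDerivAt_id' r).const_mul (-2 * p)).mul (hasDerivAt_one_add_sq_rpow (-p - 1) r)
    have hsplit : (1 + r ^ 2) ^ (-p - 1) = (1 + r ^ 2) * (1 + r ^ 2) ^ (-p - 2) := by
      rw [show -p - 1 = 1 + (-p - 2) by ring, rpow_add h1, rpow_one]
    rw [show -p - 1 - 1 = -p - 2 by ring, hsplit] at h
    have hfun : (fun y : ℝ => 2 * y * -p * (1 + y ^ 2) ^ (-p - 1))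
        = fun y => -2 * p * y * (1 + y ^ 2) ^ (-p - 1) := by
      ext y; ring
    rw [hfun]
    exact (h.congr_deriv (by ring)).hasDerivWithinAt
  · rw [interior_Icc] at hr
    have hr2 : r ^ 2 ≤ R ^ 2 := sq_le_sq' hr.1.le hr.2.le
    have : 0 ≤ 1 - (1 + 2 * p) * r ^ 2 := by nlinarith
    have : 0 ≤ 2 * p * (1 + r ^ 2) ^ (-p - 2) * (1 - (1 + 2 * p) * r ^ 2) := by positivity
    linarith

theorem weight_power_concave (β : ℝ) (hβ : 0 < β) :
    ConcaveOn ℝ {x : EuclideanSpace ℝ (Fin 2) | ‖x‖ ^ 2 ≤ 1 / (1 + 4 * β)}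
      (fun x => (4 / (1 + ‖x‖ ^ 2) ^ 2) ^ β) := by
  set R := √(1 / (1 + 4 * β))
  have hR : R ^ 2 = 1 / (1 + 4 * β) := sq_sqrt (by positivity)
  have hball : {x : EuclideanSpace ℝ (Fin 2) | ‖x‖ ^ 2 ≤ 1 / (1 + 4 * β)} = closedBall 0 R := by
    ext x
    rw [mem_ofPred_eq, mem_closedBall_zero_iff, le_sqrt (norm_nonneg x) (by positivity)]
  have hweight (s : ℝ) (hs : 0 ≤ s) :
      (4 / (1 + s) ^ 2) ^ β = (4 : ℝ) ^ β • (1 + s) ^ (-(2 * β)) := by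
    rw [div_rpow (by norm_num) (by positivity), ← rpow_natCast, ← rpow_mul (by positivity),
      rpow_neg (by positivity), smul_eq_mul, div_eq_mul_inv, Nat.cast_ofNat]
  have hconc : ConcaveOn ℝ (Icc 0 R) fun r : ℝ => (1 + r ^ 2) ^ (-(2 * β)) :=
    (concaveOn_one_add_sq_rpow_neg (by positivity) (by rw [hR]; field_simp; linarith)).subset
      (Icc_subset_Icc_left (neg_nonpos.mpr (sqrt_nonneg _))) (convex_Icc 0 R)
  have hanti : AntitoneOn (fun r : ℝ => (1 + r ^ 2) ^ (-(2 * β))) (Icc 0 R) :=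
    (antitoneOn_one_add_sq_rpow (by linarith)).mono Icc_subset_Ici_self
  rw [hball]
  simp_rw [hweight _ (sq_nonneg _)]
  exact (hconc.comp_norm_closedBall hanti).smul (by positivity)
end

section
/- Let β > 0 and define g_β : ℝ² → ℝ by g_β(x) = (4/(1+‖x‖²)²)^β. Then for every x ∈ ℝ²: (i) for every y ∈ ℝ² with ⟪x,y⟫ = 0, the second derivative satisfies D²g_β(x)(y,y) = −(4^{1+β}·β/(1+‖x‖²)^{1+2β})·‖y‖²; and (ii) D²g_β(x)(x,x) = (4^{1+β}·β·((1+4β)·‖x‖² − 1)/(1+‖x‖²)^{2(1+β)})·‖x‖². In particular, the eigenvalues of the Hessian of g_β at x are −4^{1+β}β/(1+‖x‖²)^{1+2β} and 4^{1+β}β(−1+(1+4β)‖x‖²)/(1+‖x‖²)^{2(1+β)}, both of which are negative whenever ‖x‖² < 1/(1+4β). -/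
/-!
The function is radial, `g_β z = φ (‖z‖²)` with `φ t = 4^β (1 + t)^(-2β)`. For any radial function
the chain rule gives `D²g(x)(y, v) = 4 φ''(‖x‖²) ⟪x, y⟫ ⟪x, v⟫ + 2 φ'(‖x‖²) ⟪y, v⟫`, so `x⊥` and `x`
are eigendirections of the Hessian with eigenvalues `2 φ'(‖x‖²)` and `4 φ''(‖x‖²) ‖x‖² + 2 φ'(‖x‖²)`;
what remains is to evaluate these for this `φ`.
-/

open scoped RealInnerProductSpace

section RadialFunction

variable {E : Type*} [NormedAddCommGroup E] [InnerProductSpace ℝ E] {φ φ' : ℝ → ℝ} {φ'' : ℝ}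
  {x : E}

theorem HasDerivAt.hasFDerivAt_comp_norm_sq {d : ℝ} (h : HasDerivAt φ d (‖x‖ ^ 2)) :
    HasFDerivAt (fun z : E => φ (‖z‖ ^ 2)) ((2 * d) • innerSL ℝ x) x := by
  refine (h.comp_hasFDerivAt x (hasStrictFDerivAt_norm_sq x).hasFDerivAt).congr_fderiv ?_
  ext v
  simp only [smul_apply, coe_innerSL_apply, nsmul_eq_mul, Nat.cast_ofNat, smul_eq_mul]
  ring

theorem fderiv_comp_norm_sq (hφ : ∀ t, 0 ≤ t → HasDerivAt φ (φ' t) t) :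
    fderiv ℝ (fun z : E => φ (‖z‖ ^ 2)) = fun z => (2 * φ' (‖z‖ ^ 2)) • innerSL ℝ z :=
  funext fun z => (hφ _ (by positivity)).hasFDerivAt_comp_norm_sq.fderiv

theorem fderiv_fderiv_comp_norm_sq_apply (hφ : ∀ t, 0 ≤ t → HasDerivAt φ (φ' t) t)
    (hφ' : HasDerivAt φ' φ'' (‖x‖ ^ 2)) (y v : E) :
    fderiv ℝ (fderiv ℝ fun z : E => φ (‖z‖ ^ 2)) x y v =
      4 * φ'' * ⟪x, y⟫ * ⟪x, v⟫ + 2 * φ' (‖x‖ ^ 2) * ⟪y, v⟫ := by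
  have hgrad : HasFDerivAt (fun z : E => (2 * φ' (‖z‖ ^ 2)) • innerSL ℝ z) _ x :=
    (hφ'.hasFDerivAt_comp_norm_sq.const_mul (2 : ℝ)).smul (innerSL ℝ).hasFDerivAt
  rw [fderiv_comp_norm_sq hφ, hgrad.fderiv]
  simp only [add_apply, smul_apply, ContinuousLinearMap.smulRight_apply, innerSL_apply_apply,
    smul_eq_mul]
  rw [innerSL_apply_apply]
  ring

theorem fderiv_fderiv_comp_norm_sq_apply_of_inner_eq_zero
    (hφ : ∀ t, 0 ≤ t → HasDerivAt φ (φ' t) t) (hφ' : HasDerivAt φ' φ'' (‖x‖ ^ 2)) {y : E}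
    (hxy : ⟪x, y⟫ = 0) :
    fderiv ℝ (fderiv ℝ fun z : E => φ (‖z‖ ^ 2)) x y y = 2 * φ' (‖x‖ ^ 2) * ‖y‖ ^ 2 := by
  rw [fderiv_fderiv_comp_norm_sq_apply hφ hφ', hxy, real_inner_self_eq_norm_sq]
  ring

theorem fderiv_fderiv_comp_norm_sq_apply_self
    (hφ : ∀ t, 0 ≤ t → HasDerivAt φ (φ' t) t) (hφ' : HasDerivAt φ' φ'' (‖x‖ ^ 2)) :
    fderiv ℝ (fderiv ℝ fun z : E => φ (‖z‖ ^ 2)) x x x =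
      (4 * φ'' * ‖x‖ ^ 2 + 2 * φ' (‖x‖ ^ 2)) * ‖x‖ ^ 2 := by
  rw [fderiv_fderiv_comp_norm_sq_apply hφ hφ', real_inner_self_eq_norm_sq]
  ring

end RadialFunction

theorem hasDerivAt_one_add_rpow (p : ℝ) {t : ℝ} (ht : 0 < 1 + t) :
    HasDerivAt (fun s : ℝ => (1 + s) ^ p) (p * (1 + t) ^ (p - 1)) t :=
  (Real.hasDerivAt_rpow_const (Or.inl ht.ne')).comp_const_add 1 t

section ConformalWeight

variable (β : ℝ) {t : ℝ}

theorem four_div_one_add_sq_rpow (ht : 0 < 1 + t) :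
    (4 / (1 + t) ^ 2) ^ β = (4 : ℝ) ^ β * (1 + t) ^ (-(2 * β)) := by
  rw [Real.div_rpow (by norm_num) (by positivity), ← Real.rpow_natCast (1 + t) 2,
    ← Real.rpow_mul ht.le, div_eq_mul_inv, ← Real.rpow_neg ht.le]
  norm_num

theorem four_rpow_one_add : (4 : ℝ) ^ (1 + β) = 4 * 4 ^ β := by
  rw [Real.rpow_add (by norm_num), Real.rpow_one]

theorem conformalWeight_tangential_eigenvalue (ht : 0 < 1 + t) :
    2 * ((4 : ℝ) ^ β * (-(2 * β) * (1 + t) ^ (-(2 * β) - 1))) =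
      -((4 : ℝ) ^ (1 + β) * β / (1 + t) ^ (1 + 2 * β)) := by
  rw [show 1 + 2 * β = -(-(2 * β) - 1) by ring, Real.rpow_neg ht.le, four_rpow_one_add]
  field_simp
  ring

theorem conformalWeight_radial_eigenvalue (ht : 0 < 1 + t) :
    4 * ((4 : ℝ) ^ β * (-(2 * β) * ((-(2 * β) - 1) * (1 + t) ^ (-(2 * β) - 1 - 1)))) * t +
        2 * ((4 : ℝ) ^ β * (-(2 * β) * (1 + t) ^ (-(2 * β) - 1))) =
      (4 : ℝ) ^ (1 + β) * β * ((1 + 4 * β) * t - 1) / (1 + t) ^ (2 * (1 + β)) := by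
  have hpow : (1 + t) ^ (-(2 * β) - 1) = (1 + t) * (1 + t) ^ (-(2 * β) - 1 - 1) := by
    rw [Real.rpow_sub_one ht.ne' (-(2 * β) - 1)]
    field_simp
  rw [show 2 * (1 + β) = -(-(2 * β) - 1 - 1) by ring, Real.rpow_neg ht.le, hpow,
    four_rpow_one_add]
  field_simp
  ring

end ConformalWeight

theorem hessian_of_conformal_weight_power (β : ℝ) (hβ : 0 < β)
    (x : EuclideanSpace ℝ (Fin 2)) :
    (∀ y : EuclideanSpace ℝ (Fin 2), ⟪x, y⟫ = 0 →
        fderiv ℝ (fderiv ℝ (fun z : EuclideanSpace ℝ (Fin 2) =>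
            (4 / (1 + ‖z‖ ^ 2) ^ 2) ^ β)) x y y =
          -((4 : ℝ) ^ (1 + β) * β / (1 + ‖x‖ ^ 2) ^ (1 + 2 * β)) * ‖y‖ ^ 2) ∧
      fderiv ℝ (fderiv ℝ (fun z : EuclideanSpace ℝ (Fin 2) =>
          (4 / (1 + ‖z‖ ^ 2) ^ 2) ^ β)) x x x =
        (4 : ℝ) ^ (1 + β) * β * ((1 + 4 * β) * ‖x‖ ^ 2 - 1) /
            (1 + ‖x‖ ^ 2) ^ (2 * (1 + β)) * ‖x‖ ^ 2 ∧
      (‖x‖ ^ 2 < 1 / (1 + 4 * β) →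
        -((4 : ℝ) ^ (1 + β) * β / (1 + ‖x‖ ^ 2) ^ (1 + 2 * β)) < 0 ∧
          (4 : ℝ) ^ (1 + β) * β * (-1 + (1 + 4 * β) * ‖x‖ ^ 2) /
              (1 + ‖x‖ ^ 2) ^ (2 * (1 + β)) < 0) := by
  have hpos : ∀ t : ℝ, 0 ≤ t → 0 < 1 + t := fun t ht => by linarith
  have hx : 0 < 1 + ‖x‖ ^ 2 := hpos _ (by positivity)
  have hφ : ∀ t : ℝ, 0 ≤ t → HasDerivAt (fun t : ℝ => (4 : ℝ) ^ β * (1 + t) ^ (-(2 * β)))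
      ((4 : ℝ) ^ β * (-(2 * β) * (1 + t) ^ (-(2 * β) - 1))) t := fun t ht =>
    (hasDerivAt_one_add_rpow _ (hpos t ht)).const_mul _
  have hφ' := ((hasDerivAt_one_add_rpow (-(2 * β) - 1) hx).const_mul (-(2 * β))).const_mul
    ((4 : ℝ) ^ β)
  rw [funext fun z : EuclideanSpace ℝ (Fin 2) =>
    four_div_one_add_sq_rpow β (hpos (‖z‖ ^ 2) (by positivity))]
  refine ⟨fun y hxy => ?_, ?_, fun hsmall => ⟨?_, ?_⟩⟩
  · rw [fderiv_fderiv_comp_norm_sq_apply_of_inner_eq_zero hφ hφ' hxy,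
      conformalWeight_tangential_eigenvalue β hx]
  · rw [fderiv_fderiv_comp_norm_sq_apply_self hφ hφ',
      conformalWeight_radial_eigenvalue β hx]
  · have : 0 < (4 : ℝ) ^ (1 + β) * β / (1 + ‖x‖ ^ 2) ^ (1 + 2 * β) := by positivity
    linarith
  · have hlt : (1 + 4 * β) * ‖x‖ ^ 2 < 1 := by
      rwa [lt_div_iff₀ (by positivity), mul_comm] at hsmall
    exact div_neg_of_neg_of_pos (mul_neg_of_pos_of_neg (by positivity) (by linarith))
      (by positivity)
end

section
/- Define F : (0,1) → ℝ by F(R) = ( −5 − 5R⁴ − 14R² + (1+R²)·√(25 + 94R² + 25R⁴) ) / (2 − 2R²). Then for every R ∈ (0,1), F(R) ≤ F(R₀) where R₀ = √(7 − √33)/2. -/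
/-!
Write `t = R²` and `q(t) = 25 + 94 t + 25 t²`. For any `M` with `M² = 46 M − 1` one has the identity
`(5M + 1) · ((5 + 14 t + 5 t² + 2M(1 − t))² − (1 + t)² q(t)) = 4 (1 − t) ((5M + 1) t − 16 M)²`,
so `(1 + t) √q(t) ≤ 5 + 14 t + 5 t² + 2M(1 − t)` on `[0, 1]`, which is exactly `threshold R ≤ M`.
The smaller root `M = 23 − 4√33` is attained: equality holds at `t = 16M / (5M + 1) = (7 − √33)/4`.
-/

/-- The threshold value of `s = ‖x‖²` below which the spherical-Hessian condition
holds for the sphere of radius `R`. -/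
noncomputable def threshold (R : ℝ) : ℝ :=
  (-5 - 5 * R ^ 4 - 14 * R ^ 2 +
      (1 + R ^ 2) * Real.sqrt (25 + 94 * R ^ 2 + 25 * R ^ 4)) /
    (2 - 2 * R ^ 2)

lemma mul_sqrt_quadratic_le {M t : ℝ} (hM : M ^ 2 = 46 * M - 1) (ht0 : 0 ≤ t) (ht1 : t ≤ 1) :
    (1 + t) * Real.sqrt (25 + 94 * t + 25 * t ^ 2) ≤ 5 + 14 * t + 5 * t ^ 2 + 2 * M * (1 - t) := by
  have hM0 : 0 < M := by nlinarith [sq_nonneg M]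
  have key : (5 * M + 1) * ((5 + 14 * t + 5 * t ^ 2 + 2 * M * (1 - t)) ^ 2
      - (1 + t) ^ 2 * (25 + 94 * t + 25 * t ^ 2)) = 4 * (1 - t) * ((5 * M + 1) * t - 16 * M) ^ 2 := by
    linear_combination (-4 * (1 - t) * ((5 * M + 1) * t - 5 * M)) * hM
  have hsq : (1 + t) ^ 2 * (25 + 94 * t + 25 * t ^ 2)
      ≤ (5 + 14 * t + 5 * t ^ 2 + 2 * M * (1 - t)) ^ 2 := by
    have := mul_nonneg (sub_nonneg.2 ht1) (sq_nonneg ((5 * M + 1) * t - 16 * M))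
    nlinarith
  rw [← Real.sqrt_sq (by linarith : 0 ≤ 1 + t), ← Real.sqrt_mul (sq_nonneg _)]
  exact Real.sqrt_le_iff.2 ⟨by nlinarith, hsq⟩

lemma threshold_le {M R : ℝ} (hM : M ^ 2 = 46 * M - 1) (hR : R ^ 2 < 1) : threshold R ≤ M := by
  have h := mul_sqrt_quadratic_le hM (sq_nonneg R) hR.le
  rw [threshold, div_le_iff₀ (by linarith), show R ^ 4 = (R ^ 2) ^ 2 by ring]
  linarith

lemma threshold_sqrt_seven_sub_sqrt_thirtythree_div_two :
    threshold (Real.sqrt (7 - Real.sqrt 33) / 2) = 23 - 4 * Real.sqrt 33 := by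
  have hs : Real.sqrt 33 ^ 2 = 33 := Real.sq_sqrt (by norm_num)
  have hs_lb : 5 < Real.sqrt 33 := by nlinarith [Real.sqrt_nonneg 33]
  have hs_ub : Real.sqrt 33 < 7 := by nlinarith [Real.sqrt_nonneg 33]
  have ht : (Real.sqrt (7 - Real.sqrt 33) / 2) ^ 2 = (7 - Real.sqrt 33) / 4 := by
    rw [div_pow, Real.sq_sqrt (by linarith)]; norm_num
  have hq : Real.sqrt (25 + 94 * ((7 - Real.sqrt 33) / 4) + 25 * ((7 - Real.sqrt 33) / 4) ^ 2)
      = 11 * (Real.sqrt 33 - 3) / 4 := by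
    rw [Real.sqrt_eq_iff_eq_sq (by nlinarith) (by linarith)]
    linear_combination (-6 : ℝ) * hs
  rw [threshold, show (Real.sqrt (7 - Real.sqrt 33) / 2) ^ 4
      = ((Real.sqrt (7 - Real.sqrt 33) / 2) ^ 2) ^ 2 by ring, ht, hq,
    div_eq_iff (by linarith)]
  linear_combination hs

theorem threshold_maximized_at_R₀ :
    ∀ R ∈ Set.Ioo (0 : ℝ) 1,
      threshold R ≤ threshold (Real.sqrt (7 - Real.sqrt 33) / 2) := by
  rintro R ⟨hR0, hR1⟩
  rw [threshold_sqrt_seven_sub_sqrt_thirtythree_div_two]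
  have hs : Real.sqrt 33 ^ 2 = 33 := Real.sq_sqrt (by norm_num)
  exact threshold_le (by linear_combination 16 * hs) (by nlinarith)
end
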